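/- Let p be a prime and ρ ∈ [2, p-1]. Then the maximum cardinality of a subset A ⊆ Z_p with A ≠ {0}, A nonempty, and (ρ-1)·(A ∪ {0}) ≠ Z_p equals ⌊(p-2)/(ρ-1)⌋ + 1. -/

import Mathlib

/-!
Iterating Cauchy–Davenport, a nonempty `B ⊆ ℤ/p` with `n • B ≠ ℤ/p` has
`n (|B| - 1) + 1 ≤ p - 1`; applied to `B = A ∪ {0}` this gives `|A| ≤ ⌊(p-2)/n⌋ + 1`.
The bound is attained by `A = {0, 1, …, m}` with `m = ⌊(p-2)/n⌋ ≥ 1`: its `n`-fold sumset is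
`{0, …, nm}`, which misses `p - 1` since `nm ≤ p - 2`.
-/

open Pointwise

variable {G : Type*}

/-- The `n`-fold iterated sumset of a set `A` (with `0` summands giving `{0}`). -/
def iterSum [AddCommGroup G] (A : Set G) : ℕ → Set G
  | 0 => {0}
  | n + 1 => iterSum A n + A

/-- `A` generates `G` as a group. -/
def Spans [AddCommGroup G] (A : Set G) : Prop := AddSubgroup.closure A = ⊤

/-- The positive diameter of `G` with respect to `A`: the least `n` with
`n·(A ∪ {0}) = G`. -/
noncomputable def diamPlus [AddCommGroup G] (A : Set G) : ℕ :=
  sInf {n : ℕ | iterSum (insert 0 A) n = Set.univ}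

/-- The positive length of `g` with respect to `A`. -/
noncomputable def lenPlus [AddCommGroup G] (A : Set G) (g : G) : ℕ :=
  sInf {n : ℕ | g ∈ iterSum (insert 0 A) n}

/-- The absolute positive diameter of `G`. -/
noncomputable def diamAbs (G : Type*) [AddCommGroup G] : ℕ :=
  sSup {d : ℕ | ∃ A : Set G, Spans A ∧ diamPlus A = d}

/-- `A` is aperiodic: its period (stabilizer) is trivial. -/
def Aperiodic [AddCommGroup G] (A : Set G) : Prop :=
  ∀ g : G, A + {g} = A → g = 0

/-- `A` is `ρ`-maximal: maximal under inclusion subject to `(ρ-1)·(A ∪ {0}) ≠ G`. -/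
def RhoMax [AddCommGroup G] (ρ : ℕ) (A : Set G) : Prop :=
  iterSum (insert 0 A) (ρ - 1) ≠ Set.univ ∧
    ∀ B : Set G, A ⊆ B → iterSum (insert 0 B) (ρ - 1) ≠ Set.univ → B = A

/-- A standard generating set of type `m`. -/
def StandardGen [AddCommGroup G] {r : ℕ} (m : Fin r → ℕ) (e : Fin r → G) : Prop :=
  (∀ i, addOrderOf (e i) = m i) ∧
    ∀ g : G, ∃! lam : Fin r → ℕ, (∀ i, lam i < m i) ∧ g = ∑ i, lam i • e i

noncomputable def tInv (ρ : ℕ) (G : Type*) [AddCommGroup G] : ℕ :=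
  sSup {k : ℕ | ∃ A : Set G, Aperiodic A ∧ RhoMax ρ A ∧ Spans A ∧ A.ncard = k}

noncomputable def sInv (ρ : ℕ) (G : Type*) [AddCommGroup G] : ℕ :=
  sSup {k : ℕ | ∃ A : Set G, Spans A ∧ ρ ≤ diamPlus A ∧ A.ncard = k}

open Finset

lemma iterSum_eq_nsmul [AddCommGroup G] (A : Set G) : ∀ n, iterSum A n = n • A
  | 0 => by rw [iterSum, zero_nsmul, Set.singleton_zero]
  | n + 1 => by rw [iterSum, iterSum_eq_nsmul A n, succ_nsmul]

lemma Nat.nsmul_Iic_subset (m : ℕ) : ∀ n : ℕ, n • Set.Iic m ⊆ Set.Iic (n * m)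
  | 0 => by simp
  | n + 1 => by
    rw [succ_nsmul, Nat.succ_mul]
    exact (Set.add_subset_add_right (Nat.nsmul_Iic_subset m n)).trans (Set.Iic_add_Iic_subset _ _)

lemma ZMod.natCast_injOn_Iio (p : ℕ) : Set.InjOn (Nat.cast : ℕ → ZMod p) (Set.Iio p) :=
  fun a ha b hb hab => by
    rwa [ZMod.natCast_eq_natCast_iff', Nat.mod_eq_of_lt ha, Nat.mod_eq_of_lt hb] at hab

lemma ZMod.min_le_card_nsmul {p : ℕ} (hp : p.Prime) {s : Finset (ZMod p)} (hs : s.Nonempty) :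
    ∀ n : ℕ, min p (n * (#s - 1) + 1) ≤ #(n • s)
  | 0 => by simp
  | n + 1 => by
    have ih := ZMod.min_le_card_nsmul hp hs n
    have cd := ZMod.cauchy_davenport hp (hs.nsmul (n := n)) hs
    have : 1 ≤ #s := hs.card_pos
    rw [succ_nsmul, Nat.succ_mul]
    omega

lemma ZMod.mul_card_sub_one_le_of_nsmul_ne_univ {p : ℕ} [NeZero p] (hp : p.Prime)
    {s : Finset (ZMod p)} (hs : s.Nonempty) {n : ℕ} (h : n • s ≠ univ) :
    n * (#s - 1) ≤ p - 2 := by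
  have hlt : #(n • s) < p := by simpa [ZMod.card] using (card_lt_iff_ne_univ _).2 h
  have := ZMod.min_le_card_nsmul hp hs n
  omega

lemma ZMod.ncard_le_of_iterSum_ne_univ {p : ℕ} (hp : p.Prime) {n : ℕ} (hn : 0 < n)
    {A : Set (ZMod p)} (hA : A.Nonempty) (h : iterSum A n ≠ Set.univ) :
    A.ncard ≤ (p - 2) / n + 1 := by
  have : NeZero p := ⟨hp.ne_zero⟩
  classical
  have hs : A.toFinset.Nonempty := Set.toFinset_nonempty.2 hA
  have h' : n • A.toFinset ≠ univ := by
    rwa [iterSum_eq_nsmul, ← Set.coe_toFinset A, ← Finset.coe_nsmul, Ne,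
      Finset.coe_eq_univ] at h
  have key := ZMod.mul_card_sub_one_le_of_nsmul_ne_univ hp hs h'
  have : #A.toFinset - 1 ≤ (p - 2) / n := (Nat.le_div_iff_mul_le hn).2 (by rwa [mul_comm])
  rw [Set.ncard_eq_toFinset_card']
  omega

lemma ZMod.ncard_natCast_image_Iic {p m : ℕ} (hm : m < p) :
    ((Nat.cast : ℕ → ZMod p) '' Set.Iic m).ncard = m + 1 := by
  rw [((ZMod.natCast_injOn_Iio p).mono (Set.Iic_subset_Iio.2 hm)).ncard_image,
    ← Finset.coe_Iic, Set.ncard_coe_finset, Nat.card_Iic]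

lemma ZMod.iterSum_natCast_image_Iic_ne_univ {p m n : ℕ} (h : n * m + 1 < p) :
    iterSum ((Nat.cast : ℕ → ZMod p) '' Set.Iic m) n ≠ Set.univ := by
  intro huniv
  have hsub :
      iterSum ((Nat.cast : ℕ → ZMod p) '' Set.Iic m) n ⊆ Nat.cast '' Set.Iic (n * m) := by
    rw [iterSum_eq_nsmul, ← Nat.coe_castAddMonoidHom, ← Set.image_nsmul]
    exact Set.image_mono (Nat.nsmul_Iic_subset m n)
  obtain ⟨j, hj, hjp⟩ := hsub (huniv ▸ Set.mem_univ ((p - 1 : ℕ) : ZMod p))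
  have hjm : j ≤ n * m := hj
  have : j = p - 1 := ZMod.natCast_injOn_Iio p (show j < p by omega) (show p - 1 < p by omega) hjp
  omega

theorem stmt11 (p : ℕ) (hp : p.Prime) (ρ : ℕ) (hρ : 2 ≤ ρ) (hρp : ρ ≤ p - 1) :
    sSup {k : ℕ | ∃ A : Set (ZMod p), A.Nonempty ∧ A ≠ {0} ∧
        iterSum (insert 0 A) (ρ - 1) ≠ Set.univ ∧ A.ncard = k}
      = (p - 2) / (ρ - 1) + 1 := by
  have : NeZero p := ⟨hp.ne_zero⟩
  have hn : 0 < ρ - 1 := by omega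
  set m := (p - 2) / (ρ - 1)
  have hm : 1 ≤ m := (Nat.le_div_iff_mul_le hn).2 (by omega)
  have hnm : (ρ - 1) * m + 1 < p := by
    have : m * (ρ - 1) ≤ p - 2 := Nat.div_mul_le_self _ _
    rw [mul_comm]
    omega
  have hmp : m < p := lt_of_le_of_lt (Nat.le_mul_of_pos_left m hn) (by omega)
  have h0 : (0 : ZMod p) ∈ (Nat.cast : ℕ → ZMod p) '' Set.Iic m :=
    ⟨0, Set.mem_Iic.2 m.zero_le, Nat.cast_zero⟩
  have hcard := ZMod.ncard_natCast_image_Iic hmp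
  refine IsGreatest.csSup_eq ⟨⟨_, ⟨0, h0⟩, ?_, ?_, hcard⟩, ?_⟩
  · rintro h
    rw [h, Set.ncard_singleton] at hcard
    omega
  · rw [Set.insert_eq_of_mem h0]
    exact ZMod.iterSum_natCast_image_Iic_ne_univ hnm
  · rintro k ⟨A, -, -, hA, rfl⟩
    exact (Set.ncard_le_ncard (Set.subset_insert 0 A)).trans
      (ZMod.ncard_le_of_iterSum_ne_univ hp hn (Set.insert_nonempty 0 A) hA)
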